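/- Let f : ℝ^d → ℝ be a Schwartz function with f(0) > 0, f̂(0) > 0, f(x) ≤ 0 for |x| ≥ r, and f̂ ≥ 0 everywhere. Suppose μ = δ_0 + ν is a tempered distribution with ν a nonnegative measure supported in {x : |x| ≥ r}, and suppose μ̂ ≥ c·δ_0 as distributions (meaning μ̂ − c·δ_0 is a nonnegative measure) for some c > 0. Then f(0)/f̂(0) ≥ c. -/

import Mathlib

/-!
Pair `μ̂ = c δ₀ + ν'` with `g = 𝓕⁻ f`, whose Fourier transform is `f`:
`f(0) ≥ f(0) + ∫ f dν = c f̂(0) + ∫ 𝓕⁻ f dν' ≥ c f̂(0)`, since `f ≤ 0` on the support of `ν`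
and `𝓕⁻ f (x) = f̂(-x) ≥ 0`.
-/

open MeasureTheory FourierTransform SchwartzMap

section ReIntegral

variable {X : Type*} [MeasurableSpace X] {μ : Measure X} {f : X → ℂ}

theorem Complex.re_integral_nonneg_of_ae (hf : Integrable f μ) (h : ∀ᵐ x ∂μ, 0 ≤ (f x).re) :
    0 ≤ (∫ x, f x ∂μ).re := by
  rw [← RCLike.re_to_complex, ← integral_re hf]
  exact integral_nonneg_of_ae h

theorem Complex.re_integral_nonpos_of_ae (hf : Integrable f μ) (h : ∀ᵐ x ∂μ, (f x).re ≤ 0) :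
    (∫ x, f x ∂μ).re ≤ 0 := by
  rw [← RCLike.re_to_complex, ← integral_re hf]
  exact integral_nonpos_of_ae h

end ReIntegral

theorem MeasureTheory.ae_le_norm_of_measure_norm_lt_eq_zero {E : Type*} [NormedAddCommGroup E]
    [MeasurableSpace E] {ν : Measure E} {r : ℝ} (h : ν {x | ‖x‖ < r} = 0) :
    ∀ᵐ x ∂ν, r ≤ ‖x‖ := by
  simpa only [ae_iff, not_le] using h

variable {V : Type*} [NormedAddCommGroup V] [InnerProductSpace ℝ V] [FiniteDimensional ℝ V]
  [MeasurableSpace V] [BorelSpace V]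

theorem SchwartzMap.pairing_fourierInv {c : ℝ} {ν ν' : Measure V}
    (hμhat : ∀ g : 𝓢(V, ℂ), (𝓕 ⇑g) 0 + ∫ x, (𝓕 ⇑g) x ∂ν = c • g 0 + ∫ x, g x ∂ν')
    (f : 𝓢(V, ℂ)) :
    f 0 + ∫ x, f x ∂ν = c • (𝓕 ⇑f) 0 + ∫ x, (𝓕⁻ ⇑f) x ∂ν' := by
  have h := hμhat (𝓕⁻ f)
  rwa [← fourier_coe, fourier_fourierInv_eq, fourierInv_coe, Real.fourierInv_eq_fourier_neg,
    neg_zero] at h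

theorem dual_lp_bound_general
    (d : ℕ) (r c : ℝ)
    (ν ν' : Measure (EuclideanSpace ℝ (Fin d)))
    (hsupp : ν {x | ‖x‖ < r} = 0)
    (hνint : ∀ g : 𝓢(EuclideanSpace ℝ (Fin d), ℂ), Integrable (⇑g) ν)
    (hν'int : ∀ g : 𝓢(EuclideanSpace ℝ (Fin d), ℂ), Integrable (⇑g) ν')
    (hμhat : ∀ g : 𝓢(EuclideanSpace ℝ (Fin d), ℂ),
      (𝓕 ⇑g) 0 + ∫ x, (𝓕 ⇑g) x ∂ν = c • g 0 + ∫ x, g x ∂ν')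
    (f : 𝓢(EuclideanSpace ℝ (Fin d), ℂ))
    (hfhat0 : 0 < ((𝓕 ⇑f) 0).re)
    (hneg : ∀ x, r ≤ ‖x‖ → (f x).re ≤ 0)
    (hpos : ∀ y, 0 ≤ ((𝓕 ⇑f) y).re) :
    c ≤ (f 0).re / ((𝓕 ⇑f) 0).re := by
  have hpair := congrArg Complex.re (pairing_fourierInv hμhat f)
  have hν : (∫ x, f x ∂ν).re ≤ 0 := Complex.re_integral_nonpos_of_ae (hνint f) <|
    (ae_le_norm_of_measure_norm_lt_eq_zero hsupp).mono hneg
  have hν' : 0 ≤ (∫ x, (𝓕⁻ ⇑f) x ∂ν').re := by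
    refine Complex.re_integral_nonneg_of_ae (fourierInv_coe f ▸ hν'int (𝓕⁻ f)) (.of_forall ?_)
    intro x
    rw [Real.fourierInv_eq_fourier_neg]
    exact hpos (-x)
  simp only [Complex.add_re, Complex.real_smul, Complex.re_ofReal_mul] at hpair
  rw [le_div_iff₀ hfhat0]
  linarith

/-- **Dual linear programming bound.**
Let `μ = δ₀ + ν` be a tempered distribution on `ℝ^d`, where `ν` is a nonnegative measure
supported in `{x : ‖x‖ ≥ r}` against which all Schwartz functions are integrable.  Suppose
`μ̂ ≥ c·δ₀` in the sense that `μ̂ = c·δ₀ + ν'` for a nonnegative measure `ν'`, i.e. for every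
Schwartz function `g`, `⟨μ, 𝓕 g⟩ = c·g(0) + ∫ g dν'` (the left side being the pairing of `μ̂`
with `g`, defined by duality), with `c > 0`.  Then every real-valued Schwartz function `f`
with `f 0 > 0`, `𝓕 f 0 > 0`, `f x ≤ 0` for `‖x‖ ≥ r`, and `𝓕 f ≥ 0` everywhere satisfies
`f 0 / 𝓕 f 0 ≥ c`. -/
theorem dual_lp_bound
    (d : ℕ) (r c : ℝ) (hr : 0 < r) (hc : 0 < c)
    (ν ν' : Measure (EuclideanSpace ℝ (Fin d)))
    (hsupp : ν {x | ‖x‖ < r} = 0)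
    (hνint : ∀ g : 𝓢(EuclideanSpace ℝ (Fin d), ℂ), Integrable (⇑g) ν)
    (hν'int : ∀ g : 𝓢(EuclideanSpace ℝ (Fin d), ℂ), Integrable (⇑g) ν')
    (hμhat : ∀ g : 𝓢(EuclideanSpace ℝ (Fin d), ℂ),
      (𝓕 ⇑g) 0 + ∫ x, (𝓕 ⇑g) x ∂ν = c • g 0 + ∫ x, g x ∂ν')
    (f : 𝓢(EuclideanSpace ℝ (Fin d), ℂ))
    (hreal : ∀ x, (f x).im = 0)
    (hf0 : 0 < (f 0).re)
    (hfhat0 : 0 < ((𝓕 ⇑f) 0).re)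
    (hfhatreal : ∀ y, ((𝓕 ⇑f) y).im = 0)
    (hneg : ∀ x, r ≤ ‖x‖ → (f x).re ≤ 0)
    (hpos : ∀ y, 0 ≤ ((𝓕 ⇑f) y).re) :
    c ≤ (f 0).re / ((𝓕 ⇑f) 0).re :=
  dual_lp_bound_general d r c ν ν' hsupp hνint hν'int hμhat f hfhat0 hneg hpos
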